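/- Let K be a differential field of characteristic zero and t a primitive generator over K (t transcendental, t′ ∈ K, C_{K(t)} = C_K). A polynomial p ∈ K[t] satisfies gcd(p, p′) = 1 if and only if p is squarefree. -/

import Mathlib

/-!
On `K[t]` the derivation of `F` acts as `∑ aᵢ tⁱ ↦ ∑ aᵢ′ tⁱ + t′ · d/dt`, which strictly lowers
the degree of monic polynomials. If `p` is squarefree and a monic irreducible `m` divides both
`p = m s` and `p′ = m′ s + m s′`, then `m ∣ m′` since `m ∤ s`, so `m′ = 0`. Then `m(t)` is a
constant, hence lies in `K`, which contradicts the transcendence of `t`. Conversely, `x² ∣ p`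
forces `x ∣ p′`.
-/

open Polynomial
open scoped Differential

section CommRing

variable {R : Type*} [CommRing R] (d : Derivation ℤ R R)

def Derivation.ofLeibniz (δ : R → R) (hadd : ∀ a b, δ (a + b) = δ a + δ b)
    (hmul : ∀ a b, δ (a * b) = δ a * b + a * δ b) : Derivation ℤ R R :=
  Derivation.mk' (AddMonoidHom.mk' δ hadd).toIntLinearMap fun a b => by
    simp only [AddMonoidHom.coe_toIntLinearMap, AddMonoidHom.mk'_apply, smul_eq_mul, hmul]
    ring

def Derivation.restrict (K : Subring R) (hK : ∀ a ∈ K, d a ∈ K) : Derivation ℤ K K :=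
  Derivation.mk'
    { toFun := fun a => ⟨d a, hK a a.2⟩
      map_add' := fun a b => Subtype.ext (d.map_add a b)
      map_smul' := fun n a => Subtype.ext (d.map_smul n a) } fun a b =>
    Subtype.ext (d.leibniz a b)

theorem Derivation.dvd_apply_of_mul_self_dvd {x p : R} (h : x * x ∣ p) : x ∣ d p := by
  obtain ⟨s, rfl⟩ := h
  rw [d.leibniz, d.leibniz]
  exact ⟨s * d x + x • d s + s • d x, by simp only [smul_eq_mul]; ring⟩

theorem Derivation.squarefree_of_isCoprime {p : R} (h : IsCoprime p (d p)) : Squarefree p :=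
  fun x hx => h.isUnit_of_dvd' (dvd_trans (dvd_mul_right x x) hx) (d.dvd_apply_of_mul_self_dvd hx)

theorem Derivation.dvd_apply_self_of_squarefree {m p : R} (hm : Prime m) (hp : Squarefree p)
    (hmp : m ∣ p) (hmd : m ∣ d p) : m ∣ d m := by
  obtain ⟨s, rfl⟩ := hmp
  have hms : ¬ m ∣ s := fun ⟨u, hu⟩ => hm.not_isUnit (hp m ⟨u, by rw [hu, mul_assoc]⟩)
  rw [d.leibniz, smul_eq_mul, smul_eq_mul, dvd_add_right (dvd_mul_right m _)] at hmd
  exact (hm.dvd_mul.mp hmd).resolve_left hms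

end CommRing

namespace Differential

section CommRing

variable {A : Type*} [CommRing A] [Nontrivial A] [Differential A]

theorem degree_mapCoeffs_lt {m : A[X]} (hm : m.Monic) : (mapCoeffs m).degree < m.degree := by
  rw [degree_eq_natDegree hm.ne_zero, degree_lt_iff_coeff_zero]
  intro k hk
  rw [coeff_mapCoeffs]
  obtain heq | hlt := (show m.natDegree ≤ k by exact_mod_cast hk).eq_or_lt
  · rw [← heq, coeff_natDegree, hm.leadingCoeff, Derivation.map_one_eq_zero]
  · rw [coeff_eq_zero_of_natDegree_lt hlt, map_zero]

omit [Nontrivial A] in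
theorem implicitDeriv_C_apply (v : A) (p : A[X]) :
    implicitDeriv (C v) p = mapCoeffs p + v • derivative p := by
  simp [implicitDeriv, smul_eq_C_mul]

theorem degree_implicitDeriv_C_lt (v : A) {m : A[X]} (hm : m.Monic) :
    (implicitDeriv (C v) m).degree < m.degree := by
  rw [implicitDeriv_C_apply]
  refine (degree_add_le _ _).trans_lt (max_lt (degree_mapCoeffs_lt hm) ?_)
  exact (degree_smul_le _ _).trans_lt (degree_derivative_lt hm.ne_zero)

end CommRing

theorem isCoprime_implicitDeriv_C_iff_squarefree {A : Type*} [Field A] [Differential A] (v : A)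
    (hker : ∀ m : A[X], implicitDeriv (C v) m = 0 → m.natDegree = 0) (p : A[X]) :
    IsCoprime p (implicitDeriv (C v) p) ↔ Squarefree p := by
  classical
  refine ⟨(implicitDeriv (C v)).squarefree_of_isCoprime, fun hp => ?_⟩
  refine isCoprime_of_irreducible_dvd (fun h => not_squarefree_zero (h.1 ▸ hp)) ?_
  intro z hz hzp hzd
  have hm : Irreducible (normalize z) := (normalize_associated z).symm.irreducible hz
  have hmD : normalize z ∣ implicitDeriv (C v) (normalize z) :=
    (implicitDeriv (C v)).dvd_apply_self_of_squarefree hm.prime hp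
      (normalize_dvd_iff.mpr hzp) (normalize_dvd_iff.mpr hzd)
  have hD0 := eq_zero_of_dvd_of_degree_lt hmD
    (degree_implicitDeriv_C_lt v (monic_normalize hz.ne_zero))
  exact hm.natDegree_pos.ne' (hker _ hD0)

theorem natDegree_eq_zero_of_aeval_mem_range {A B : Type*} [CommRing A] [CommRing B]
    [Algebra A B] {x : B} (hx : Transcendental A x) {m : A[X]}
    (h : aeval x m ∈ (algebraMap A B).range) : m.natDegree = 0 := by
  obtain ⟨c, hc⟩ := h
  rw [transcendental_iff_injective.mp hx (show aeval x m = aeval x (C c) by rw [aeval_C, hc]),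
    natDegree_C]

theorem isCoprime_implicitDeriv_C_iff_squarefree_of_transcendental {A B : Type*} [Field A]
    [CommRing B] [Differential A] [Differential B] [Algebra A B] [DifferentialAlgebra A B]
    [ContainConstants A B] {x : B} (hx : Transcendental A x) (v : A)
    (hv : x′ = algebraMap A B v) (p : A[X]) :
    IsCoprime p (implicitDeriv (C v) p) ↔ Squarefree p := by
  refine isCoprime_implicitDeriv_C_iff_squarefree v (fun m hm => ?_) p
  refine natDegree_eq_zero_of_aeval_mem_range hx (mem_range_of_deriv_eq_zero A ?_)
  rw [deriv_aeval_eq_implicitDeriv x (C v) (by rwa [aeval_C]), hm, map_zero]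

end Differential

theorem t_normal_iff_squarefree_general (F : Type*) [Field F]
    (δ : F → F)
    (hδadd : ∀ a b : F, δ (a + b) = δ a + δ b)
    (hδmul : ∀ a b : F, δ (a * b) = δ a * b + a * δ b)
    (K : Subfield F) (hK : ∀ a ∈ K, δ a ∈ K)
    (t : F) (htr : Transcendental ↥K t) (ht : δ t ∈ K)
    (hnewconst : ∀ c : F, δ c = 0 → c ∈ K)
    (p q : Polynomial ↥K)
    (hq : δ (Polynomial.aeval t p) = Polynomial.aeval t q) :
    IsCoprime p q ↔ Squarefree p := by
  let d := Derivation.ofLeibniz δ hδadd hδmul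
  let _ : Differential F := ⟨d⟩
  let _ : Differential K := ⟨d.restrict K.toSubring hK⟩
  have : DifferentialAlgebra K F := ⟨fun _ => rfl⟩
  have : Differential.ContainConstants K F := ⟨fun h => ⟨⟨_, hnewconst _ h⟩, rfl⟩⟩
  have hv : t′ = algebraMap K F ⟨δ t, ht⟩ := rfl
  have hqD : q = Differential.implicitDeriv (C ⟨δ t, ht⟩) p := by
    refine transcendental_iff_injective.mp htr ?_
    rw [← Differential.deriv_aeval_eq_implicitDeriv t _ (by rwa [aeval_C])]
    exact hq.symm
  rw [hqD]
  exact Differential.isCoprime_implicitDeriv_C_iff_squarefree_of_transcendental htr _ hv p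

/-- Let `K` be a differential field of characteristic zero and `t` a primitive
generator over `K` (transcendental, `t′ ∈ K`, no new constants).  A polynomial
`p ∈ K[t]` is `t`-normal, i.e. `gcd(p, p′) = 1` where `p′ ∈ K[t]` is the
(unique) polynomial representing the derivative of `p(t)`, if and only if `p`
is squarefree. -/
theorem t_normal_iff_squarefree (F : Type*) [Field F] [CharZero F]
    (δ : F → F)
    (hδadd : ∀ a b : F, δ (a + b) = δ a + δ b)
    (hδmul : ∀ a b : F, δ (a * b) = δ a * b + a * δ b)
    (K : Subfield F) (hK : ∀ a ∈ K, δ a ∈ K)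
    (t : F) (htr : Transcendental ↥K t) (ht : δ t ∈ K)
    (hgen : Subfield.closure ((K : Set F) ∪ {t}) = ⊤)
    (hnewconst : ∀ c : F, δ c = 0 → c ∈ K)
    (p q : Polynomial ↥K)
    (hq : δ (Polynomial.aeval t p) = Polynomial.aeval t q) :
    IsCoprime p q ↔ Squarefree p :=
  t_normal_iff_squarefree_general F δ hδadd hδmul K hK t htr ht hnewconst p q hq
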